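/- In hyperspherical coordinates for n = 2, the functions Ĩ_1 = p_{θ_2} + (r²C/2)cos²θ_1 and Ĩ_2 = p_{θ_3} + (r²C/2)sin²θ_1 are first integrals of the Hamiltonian H̃_C = (1/2)[p_r² + p_{θ_1}²/r² + (1/r²)(p_{θ_2}²/cos²θ_1 + p_{θ_3}²/sin²θ_1) − (p_{θ_2}+p_{θ_3})²/(1+r²)] with respect to the twisted Poisson structure {r,p_r}=1, {θ_j, p_{θ_k}} = δ_{jk}, {p_r, p_{θ_2}} = rC cos²θ_1, {p_r, p_{θ_3}} = rC sin²θ_1, {p_{θ_1}, p_{θ_2}} = −r²C sinθ_1 cosθ_1, {p_{θ_1}, p_{θ_3}} = r²C sinθ_1 cosθ_1, {p_{θ_2}, p_{θ_3}} = 0, and all other brackets among coordinates zero. -/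

import Mathlib

open Real

/-- Phase space of the `n = 2` reduced LR system in hyperspherical coordinates:
`z = (r, θ₁, θ₂, θ₃, p_r, p_{θ₁}, p_{θ₂}, p_{θ₃})` indexed `0,…,7`. -/
abbrev Ph := Fin 8 → ℝ

/-- Partial derivative `∂ᵢf`. -/
noncomputable def pd (i : Fin 8) (f : Ph → ℝ) (z : Ph) : ℝ :=
  fderiv ℝ f z (Pi.single i 1)

/-- The twisted Poisson bracket determined by `{r,p_r}=1`, `{θⱼ,p_{θₖ}}=δⱼₖ`,
`{p_r,p_{θ₂}} = rC cos²θ₁`, `{p_r,p_{θ₃}} = rC sin²θ₁`,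
`{p_{θ₁},p_{θ₂}} = −r²C sinθ₁cosθ₁`, `{p_{θ₁},p_{θ₃}} = r²C sinθ₁cosθ₁`,
`{p_{θ₂},p_{θ₃}} = 0`, all other coordinate brackets zero, extended by
bilinearity and the Leibniz rule. -/
noncomputable def PB (C : ℝ) (f g : Ph → ℝ) (z : Ph) : ℝ :=
  (pd 0 f z * pd 4 g z - pd 4 f z * pd 0 g z)
  + (pd 1 f z * pd 5 g z - pd 5 f z * pd 1 g z)
  + (pd 2 f z * pd 6 g z - pd 6 f z * pd 2 g z)
  + (pd 3 f z * pd 7 g z - pd 7 f z * pd 3 g z)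
  + (z 0 * C * cos (z 1) ^ 2) * (pd 4 f z * pd 6 g z - pd 6 f z * pd 4 g z)
  + (z 0 * C * sin (z 1) ^ 2) * (pd 4 f z * pd 7 g z - pd 7 f z * pd 4 g z)
  + (-(z 0) ^ 2 * C * sin (z 1) * cos (z 1))
      * (pd 5 f z * pd 6 g z - pd 6 f z * pd 5 g z)
  + ((z 0) ^ 2 * C * sin (z 1) * cos (z 1))
      * (pd 5 f z * pd 7 g z - pd 7 f z * pd 5 g z)

/-- The reduced Hamiltonian
`H̃_C = (1/2)[p_r² + p_{θ₁}²/r² + (1/r²)(p_{θ₂}²/cos²θ₁ + p_{θ₃}²/sin²θ₁)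
− (p_{θ₂}+p_{θ₃})²/(1+r²)]`. -/
noncomputable def HamR (z : Ph) : ℝ :=
  (1 / 2) * ((z 4) ^ 2 + (z 5) ^ 2 / (z 0) ^ 2
    + (1 / (z 0) ^ 2) * ((z 6) ^ 2 / cos (z 1) ^ 2 + (z 7) ^ 2 / sin (z 1) ^ 2)
    - (z 6 + z 7) ^ 2 / (1 + (z 0) ^ 2))

/-- `Ĩ₁ = p_{θ₂} + (r²C/2) cos²θ₁`. -/
noncomputable def It1 (C : ℝ) (z : Ph) : ℝ := z 6 + (z 0) ^ 2 * C / 2 * cos (z 1) ^ 2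

/-- `Ĩ₂ = p_{θ₃} + (r²C/2) sin²θ₁`. -/
noncomputable def It2 (C : ℝ) (z : Ph) : ℝ := z 7 + (z 0) ^ 2 * C / 2 * sin (z 1) ^ 2

/-- `Ĩ₃ = p_{θ₁}² + p_{θ₂}²/cos²θ₁ + p_{θ₃}²/sin²θ₁ − (p_{θ₂}+p_{θ₃})²`. -/
noncomputable def It3 (z : Ph) : ℝ :=
  (z 5) ^ 2 + (z 6) ^ 2 / cos (z 1) ^ 2 + (z 7) ^ 2 / sin (z 1) ^ 2 - (z 6 + z 7) ^ 2

/-! The twisting terms of the bracket exactly compensate the `r`- and `θ₁`-dependence of the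
correction term `(r²C/2) cos²θ₁`: for every `g` one has `{Ĩ₁, g} = -∂g/∂θ₂`, i.e. `Ĩ₁` generates
translations in `θ₂`, and likewise `{Ĩ₂, g} = -∂g/∂θ₃`. The Hamiltonian `H̃_C` does not depend on
`θ₂` or `θ₃`. -/

theorem fderiv_apply_eq_zero_of_forall_add_smul_eq {𝕜 E F : Type*} [NontriviallyNormedField 𝕜]
    [NormedAddCommGroup E] [NormedSpace 𝕜 E] [NormedAddCommGroup F] [NormedSpace 𝕜 F]
    {f : E → F} {x v : E} (h : ∀ t : 𝕜, f (x + t • v) = f x) : fderiv 𝕜 f x v = 0 := by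
  by_cases hf : DifferentiableAt 𝕜 f x
  · rw [← hf.lineDeriv_eq_fderiv, lineDeriv, funext h]
    exact deriv_const _ _
  · simp [fderiv_zero_of_not_differentiableAt hf]

theorem pd_eq_zero_of_forall_add_single_eq {f : Ph → ℝ} {z : Ph} {i : Fin 8}
    (h : ∀ t : ℝ, f (z + t • Pi.single i 1) = f z) : pd i f z = 0 :=
  fderiv_apply_eq_zero_of_forall_add_smul_eq h

theorem pd_eq_of_hasFDerivAt {f : Ph → ℝ} {L : Ph →L[ℝ] ℝ} {z : Ph} (h : HasFDerivAt f L z)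
    (i : Fin 8) : pd i f z = L (Pi.single i 1) := by
  rw [pd, h.fderiv]

theorem pd_two_HamR (z : Ph) : pd 2 HamR z = 0 :=
  pd_eq_zero_of_forall_add_single_eq fun t => by simp [HamR]

theorem pd_three_HamR (z : Ph) : pd 3 HamR z = 0 :=
  pd_eq_zero_of_forall_add_single_eq fun t => by simp [HamR]

open ContinuousLinearMap

theorem hasFDerivAt_It1 (C : ℝ) (z : Ph) :
    HasFDerivAt (It1 C) ((z 0 * C * cos (z 1) ^ 2) • (proj 0 : Ph →L[ℝ] ℝ)
      - (z 0 ^ 2 * C * sin (z 1) * cos (z 1)) • proj 1 + proj 6) z := by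
  have hz (i : Fin 8) : HasFDerivAt (fun w : Ph => w i) (proj i : Ph →L[ℝ] ℝ) z :=
    hasFDerivAt_apply i z
  have hI : It1 C = fun w => w 6 + w 0 ^ 2 * (C / 2) * cos (w 1) ^ 2 := by
    funext w; rw [It1, mul_div_assoc]
  rw [hI]
  refine ((hz 6).add ((((hz 0).pow 2).mul_const (C / 2)).mul ((hz 1).cos.pow 2))).congr_fderiv ?_
  ext w
  simp
  ring

theorem hasFDerivAt_It2 (C : ℝ) (z : Ph) :
    HasFDerivAt (It2 C) ((z 0 * C * sin (z 1) ^ 2) • (proj 0 : Ph →L[ℝ] ℝ)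
      + (z 0 ^ 2 * C * sin (z 1) * cos (z 1)) • proj 1 + proj 7) z := by
  have hz (i : Fin 8) : HasFDerivAt (fun w : Ph => w i) (proj i : Ph →L[ℝ] ℝ) z :=
    hasFDerivAt_apply i z
  have hI : It2 C = fun w => w 7 + w 0 ^ 2 * (C / 2) * sin (w 1) ^ 2 := by
    funext w; rw [It2, mul_div_assoc]
  rw [hI]
  refine ((hz 7).add ((((hz 0).pow 2).mul_const (C / 2)).mul ((hz 1).sin.pow 2))).congr_fderiv ?_
  ext w
  simp
  ring

theorem PB_It1_eq_neg_pd_two (C : ℝ) (g : Ph → ℝ) (z : Ph) : PB C (It1 C) g z = -pd 2 g z := by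
  simp only [PB, pd_eq_of_hasFDerivAt (hasFDerivAt_It1 C z), add_apply, sub_apply, smul_apply,
    proj_apply, Pi.single_eq_same, ne_eq, Fin.reduceEq, not_false_eq_true, Pi.single_eq_of_ne,
    smul_eq_mul]
  ring

theorem PB_It2_eq_neg_pd_three (C : ℝ) (g : Ph → ℝ) (z : Ph) : PB C (It2 C) g z = -pd 3 g z := by
  simp only [PB, pd_eq_of_hasFDerivAt (hasFDerivAt_It2 C z), add_apply, smul_apply,
    proj_apply, Pi.single_eq_same, ne_eq, Fin.reduceEq, not_false_eq_true, Pi.single_eq_of_ne,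
    smul_eq_mul]
  ring

theorem LR_hyperspherical_linear_integrals_general (C : ℝ) (z : Ph) :
    PB C (It1 C) HamR z = 0 ∧ PB C (It2 C) HamR z = 0 := by
  rw [PB_It1_eq_neg_pd_two, PB_It2_eq_neg_pd_three, pd_two_HamR, pd_three_HamR, neg_zero]
  exact ⟨rfl, rfl⟩

/-- `Ĩ₁` and `Ĩ₂` are first integrals of `H̃_C` with respect to
the twisted Poisson structure. -/
theorem LR_hyperspherical_linear_integrals (C : ℝ) (z : Ph)
    (hr : 0 < z 0) (hθ : sin (z 1) * cos (z 1) ≠ 0) :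
    PB C (It1 C) HamR z = 0 ∧ PB C (It2 C) HamR z = 0 :=
  LR_hyperspherical_linear_integrals_general C z
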